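/- The linear map Φ : ℋ_{ℤ×ℤ≥1} → ℋ_ℤ sending the two-row symbol [s⃗; u⃗] to [s⃗] (forgetting the bottom row) is a unital algebra homomorphism from the two-row extended shuffle algebra to the extended shuffle algebra. -/

import Mathlib

noncomputable section

/-- The vector space ℋ_ℤ with basis the symbols `[s₁,…,s_k]` (lists of integers),
the empty list being the unit `1`. -/
abbrev HZ : Type := List ℤ →₀ ℚ

/-- The basis symbol `[s₁,…,s_k]`. -/
def bs (l : List ℤ) : HZ := Finsupp.single l 1

/-- Linear extension of a map defined on basis symbols. -/
def hlift (f : List ℤ → HZ) : HZ →ₗ[ℚ] HZ := Finsupp.lift HZ ℚ (List ℤ) f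

/-- Prepending a `0` entry to every basis symbol. -/
def preZ : HZ →ₗ[ℚ] HZ := hlift fun l => bs (0 :: l)

/-- The operator `I` adding 1 to the first entry. -/
def Imap : HZ →ₗ[ℚ] HZ := hlift fun l =>
  match l with
  | [] => 0
  | s :: r => bs ((s + 1) :: r)

/-- The operator `J` subtracting 1 from the first entry, with `J(1) = 0`. -/
def Jmap : HZ →ₗ[ℚ] HZ := hlift fun l =>
  match l with
  | [] => 0
  | s :: r => bs ((s - 1) :: r)

/-- The five-case recursion defining the extended shuffle product on ℋ_ℤ. -/
def IsExtShuffle (m : HZ →ₗ[ℚ] HZ →ₗ[ℚ] HZ) : Prop :=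
  (∀ x, m (bs []) x = x) ∧
  (∀ x, m x (bs []) = x) ∧
  (∀ (s' : List ℤ) (t₁ : ℤ) (t' : List ℤ),
    m (bs (0 :: s')) (bs (t₁ :: t')) = preZ (m (bs s') (bs (t₁ :: t')))) ∧
  (∀ (s₁ : ℤ), 0 < s₁ → ∀ (s' t' : List ℤ),
    m (bs (s₁ :: s')) (bs (0 :: t')) = preZ (m (bs (s₁ :: s')) (bs t'))) ∧
  (∀ (s₁ t₁ : ℤ), 0 < s₁ → 0 < t₁ → ∀ (s' t' : List ℤ),
    m (bs (s₁ :: s')) (bs (t₁ :: t')) =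
      Imap (m (bs (s₁ :: s')) (bs ((t₁ - 1) :: t'))) +
      Imap (m (bs ((s₁ - 1) :: s')) (bs (t₁ :: t')))) ∧
  (∀ (s₁ t₁ : ℤ), 0 < s₁ → t₁ < 0 → ∀ (s' t' : List ℤ),
    m (bs (s₁ :: s')) (bs (t₁ :: t')) =
      Jmap (m (bs (s₁ :: s')) (bs ((t₁ + 1) :: t'))) -
      m (bs ((s₁ - 1) :: s')) (bs ((t₁ + 1) :: t'))) ∧
  (∀ (s₁ : ℤ), s₁ < 0 → ∀ (t₁ : ℤ) (s' t' : List ℤ),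
    m (bs (s₁ :: s')) (bs (t₁ :: t')) =
      Jmap (m (bs ((s₁ + 1) :: s')) (bs (t₁ :: t'))) -
      m (bs ((s₁ + 1) :: s')) (bs ((t₁ - 1) :: t')))

/-- The space with basis the two-row symbols: lists of columns `(sᵢ, uᵢ)` with `sᵢ ∈ ℤ` and
`uᵢ ∈ ℤ≥1`. -/
abbrev H2 : Type := List (ℤ × ℕ+) →₀ ℚ

/-- The basis two-row symbol. -/
def bs2 (l : List (ℤ × ℕ+)) : H2 := Finsupp.single l 1

/-- Linear extension of a map defined on two-row basis symbols. -/
def hlift2 (f : List (ℤ × ℕ+) → H2) : H2 →ₗ[ℚ] H2 := Finsupp.lift H2 ℚ (List (ℤ × ℕ+)) f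

/-- Prepending a column to every basis symbol. -/
def pre2 (c : ℤ × ℕ+) : H2 →ₗ[ℚ] H2 := hlift2 fun l => bs2 (c :: l)

/-- The operator `I^S` adding 1 to the first top-row entry. -/
def I2 : H2 →ₗ[ℚ] H2 := hlift2 fun l =>
  match l with
  | [] => 0
  | (s, u) :: r => bs2 ((s + 1, u) :: r)

/-- The operator `J^S` subtracting 1 from the first top-row entry, with `J^S(1) = 0`. -/
def J2 : H2 →ₗ[ℚ] H2 := hlift2 fun l =>
  match l with
  | [] => 0
  | (s, u) :: r => bs2 ((s - 1, u) :: r)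

/-- The five-case recursion defining the extended shuffle product on two-row symbols. -/
def IsExtShuffle2 (m : H2 →ₗ[ℚ] H2 →ₗ[ℚ] H2) : Prop :=
  (∀ x, m (bs2 []) x = x) ∧
  (∀ x, m x (bs2 []) = x) ∧
  (∀ (u₁ : ℕ+) (p' : List (ℤ × ℕ+)) (t₁ : ℤ) (v₁ : ℕ+) (q' : List (ℤ × ℕ+)),
    m (bs2 ((0, u₁) :: p')) (bs2 ((t₁, v₁) :: q')) =
      pre2 (0, u₁) (m (bs2 p') (bs2 ((t₁, v₁) :: q')))) ∧
  (∀ (s₁ : ℤ), 0 < s₁ → ∀ (u₁ v₁ : ℕ+) (p' q' : List (ℤ × ℕ+)),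
    m (bs2 ((s₁, u₁) :: p')) (bs2 ((0, v₁) :: q')) =
      pre2 (0, v₁) (m (bs2 ((s₁, u₁) :: p')) (bs2 q'))) ∧
  (∀ (s₁ t₁ : ℤ), 0 < s₁ → 0 < t₁ → ∀ (u₁ v₁ : ℕ+) (p' q' : List (ℤ × ℕ+)),
    m (bs2 ((s₁, u₁) :: p')) (bs2 ((t₁, v₁) :: q')) =
      I2 (m (bs2 ((s₁, u₁) :: p')) (bs2 ((t₁ - 1, v₁) :: q'))) +
      I2 (m (bs2 ((s₁ - 1, u₁) :: p')) (bs2 ((t₁, v₁) :: q')))) ∧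
  (∀ (s₁ t₁ : ℤ), 0 < s₁ → t₁ < 0 → ∀ (u₁ v₁ : ℕ+) (p' q' : List (ℤ × ℕ+)),
    m (bs2 ((s₁, u₁) :: p')) (bs2 ((t₁, v₁) :: q')) =
      J2 (m (bs2 ((s₁, u₁) :: p')) (bs2 ((t₁ + 1, v₁) :: q'))) -
      m (bs2 ((s₁ - 1, u₁) :: p')) (bs2 ((t₁ + 1, v₁) :: q'))) ∧
  (∀ (s₁ : ℤ), s₁ < 0 → ∀ (t₁ : ℤ) (u₁ v₁ : ℕ+) (p' q' : List (ℤ × ℕ+)),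
    m (bs2 ((s₁, u₁) :: p')) (bs2 ((t₁, v₁) :: q')) =
      J2 (m (bs2 ((s₁ + 1, u₁) :: p')) (bs2 ((t₁, v₁) :: q'))) -
      m (bs2 ((s₁ + 1, u₁) :: p')) (bs2 ((t₁ - 1, v₁) :: q')))

/-- The projection forgetting the bottom row. -/
def Phi : H2 →ₗ[ℚ] HZ := Finsupp.lift HZ ℚ (List (ℤ × ℕ+)) fun l => bs (l.map Prod.fst)

/-!
Φ intertwines the structure maps of the two recursions: it sends `pre2 (0, u)`, `I^S`, `J^S`
to `preZ`, `I`, `J`, and keeps the top row, hence the case of the recursion that applies.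
So `Φ (p ⧢ q) = Φ p ⧢ Φ q` on basis symbols by induction along the recursion, which
terminates for the lexicographic order on (total length, `|s₁|`, `|t₁|`); bilinearity does
the rest.
-/

lemma hlift_bs (f : List ℤ → HZ) (l : List ℤ) : hlift f (bs l) = f l := by
  simp [hlift, bs]

lemma hlift2_bs2 (f : List (ℤ × ℕ+) → H2) (l : List (ℤ × ℕ+)) : hlift2 f (bs2 l) = f l := by
  simp [hlift2, bs2]

lemma Phi_bs2 (l : List (ℤ × ℕ+)) : Phi (bs2 l) = bs (l.map Prod.fst) := by
  simp [Phi, bs2]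

lemma Phi_comp_pre2_zero (u : ℕ+) : Phi ∘ₗ pre2 (0, u) = preZ ∘ₗ Phi := by
  ext l : 2
  change Phi (pre2 (0, u) (bs2 l)) = preZ (Phi (bs2 l))
  simp [pre2, preZ, hlift2_bs2, hlift_bs, Phi_bs2]

lemma Phi_comp_I2 : Phi ∘ₗ I2 = Imap ∘ₗ Phi := by
  ext l : 2
  change Phi (I2 (bs2 l)) = Imap (Phi (bs2 l))
  rcases l with _ | ⟨⟨s, u⟩, r⟩ <;> simp [I2, Imap, hlift2_bs2, hlift_bs, Phi_bs2]

lemma Phi_comp_J2 : Phi ∘ₗ J2 = Jmap ∘ₗ Phi := by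
  ext l : 2
  change Phi (J2 (bs2 l)) = Jmap (Phi (bs2 l))
  rcases l with _ | ⟨⟨s, u⟩, r⟩ <;> simp [J2, Jmap, hlift2_bs2, hlift_bs, Phi_bs2]

lemma Phi_pre2_zero (u : ℕ+) (x : H2) : Phi (pre2 (0, u) x) = preZ (Phi x) :=
  LinearMap.congr_fun (Phi_comp_pre2_zero u) x

lemma Phi_I2 (x : H2) : Phi (I2 x) = Imap (Phi x) :=
  LinearMap.congr_fun Phi_comp_I2 x

lemma Phi_J2 (x : H2) : Phi (J2 x) = Jmap (Phi x) :=
  LinearMap.congr_fun Phi_comp_J2 x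

def headTopNatAbs : List (ℤ × ℕ+) → ℕ
  | [] => 0
  | (s, _) :: _ => s.natAbs

theorem Phi_m2_bs2 {m : HZ →ₗ[ℚ] HZ →ₗ[ℚ] HZ} (hm : IsExtShuffle m)
    {m2 : H2 →ₗ[ℚ] H2 →ₗ[ℚ] H2} (hm2 : IsExtShuffle2 m2) (p q : List (ℤ × ℕ+)) :
    Phi (m2 (bs2 p) (bs2 q)) = m (Phi (bs2 p)) (Phi (bs2 q)) := by
  have ⟨m_one_left, m_one_right, m_zero_left, m_zero_right, m_pos_pos, m_pos_neg, m_neg_left⟩ := hm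
  have ⟨m2_one_left, m2_one_right, m2_zero_left, m2_zero_right, m2_pos_pos, m2_pos_neg,
    m2_neg_left⟩ := hm2
  match p, q with
  | [], q => rw [m2_one_left, Phi_bs2 [], List.map_nil, m_one_left]
  | p, [] => rw [m2_one_right, Phi_bs2 [], List.map_nil, m_one_right]
  | (s₁, u₁) :: p', (t₁, v₁) :: q' =>
    rcases lt_trichotomy s₁ 0 with hs | rfl | hs
    · rw [m2_neg_left s₁ hs, map_sub, Phi_J2,
        Phi_m2_bs2 hm hm2 ((s₁ + 1, u₁) :: p') ((t₁, v₁) :: q'),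
        Phi_m2_bs2 hm hm2 ((s₁ + 1, u₁) :: p') ((t₁ - 1, v₁) :: q')]
      simp only [Phi_bs2, List.map_cons]
      rw [m_neg_left s₁ hs]
    · rw [m2_zero_left, Phi_pre2_zero, Phi_m2_bs2 hm hm2 p' ((t₁, v₁) :: q')]
      simp only [Phi_bs2, List.map_cons]
      rw [m_zero_left]
    rcases lt_trichotomy t₁ 0 with ht | rfl | ht
    · rw [m2_pos_neg s₁ t₁ hs ht, map_sub, Phi_J2,
        Phi_m2_bs2 hm hm2 ((s₁, u₁) :: p') ((t₁ + 1, v₁) :: q'),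
        Phi_m2_bs2 hm hm2 ((s₁ - 1, u₁) :: p') ((t₁ + 1, v₁) :: q')]
      simp only [Phi_bs2, List.map_cons]
      rw [m_pos_neg s₁ t₁ hs ht]
    · rw [m2_zero_right s₁ hs, Phi_pre2_zero, Phi_m2_bs2 hm hm2 ((s₁, u₁) :: p') q']
      simp only [Phi_bs2, List.map_cons]
      rw [m_zero_right s₁ hs]
    · rw [m2_pos_pos s₁ t₁ hs ht, map_add, Phi_I2, Phi_I2,
        Phi_m2_bs2 hm hm2 ((s₁, u₁) :: p') ((t₁ - 1, v₁) :: q'),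
        Phi_m2_bs2 hm hm2 ((s₁ - 1, u₁) :: p') ((t₁, v₁) :: q')]
      simp only [Phi_bs2, List.map_cons]
      rw [m_pos_pos s₁ t₁ hs ht]
termination_by (p.length + q.length, headTopNatAbs p, headTopNatAbs q)
decreasing_by
  all_goals simp only [headTopNatAbs, List.length_cons, Prod.lex_def, true_and]
  all_goals omega

/-- The map `Φ` forgetting bottom rows is a unital algebra homomorphism from the two-row
extended shuffle algebra to the extended shuffle algebra. -/
theorem Phi_algebra_hom (m : HZ →ₗ[ℚ] HZ →ₗ[ℚ] HZ) (hm : IsExtShuffle m)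
    (m2 : H2 →ₗ[ℚ] H2 →ₗ[ℚ] H2) (hm2 : IsExtShuffle2 m2) :
    Phi (bs2 []) = bs [] ∧ ∀ a b : H2, Phi (m2 a b) = m (Phi a) (Phi b) := by
  have h : m2.compr₂ Phi = m.compl₁₂ Phi Phi := by
    ext p q : 4
    exact Phi_m2_bs2 hm hm2 p q
  exact ⟨Phi_bs2 [], fun a b => LinearMap.congr_fun₂ h a b⟩
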